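/- Let f : ℕ × ℕ → ℝ satisfy f(k,ℓ) = f(k+1,ℓ−1) + f(k,ℓ−1) for all ℓ ≥ 1. Then the sum F(S) = Σ_{k≥3} Σ_{ℓ≥0} f(k,ℓ)·X_{k,ℓ}(S) takes the same value for all sets S of n points in general position in the plane; i.e., F(S) depends only on n. -/

import Mathlib

open Finset
open scoped Classical

def GenPos (S : Finset (ℝ × ℝ)) : Prop :=
  ∀ T ⊆ S, T.card = 3 → ¬ Collinear ℝ (T : Set (ℝ × ℝ))

def ConvexPos (T : Finset (ℝ × ℝ)) : Prop :=
  ∀ p ∈ T, p ∉ convexHull ℝ ((T : Set (ℝ × ℝ)) \ {p})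

/-- number of convex k-gons with vertices in S and exactly l points of S inside -/
noncomputable def X (S : Finset (ℝ × ℝ)) (k l : ℕ) : ℕ :=
  ((Finset.powersetCard k S).filter (fun T => ConvexPos T ∧
    (S.filter (fun p => p ∈ interior (convexHull ℝ (T : Set (ℝ × ℝ))))).card = l)).card

/-- number of extreme points (convex hull vertices) of S -/
noncomputable def hullVerts (S : Finset (ℝ × ℝ)) : ℕ :=
  (S.filter (fun p => p ∉ convexHull ℝ ((S : Set (ℝ × ℝ)) \ {p}))).card

/-!
Unfolding the recursion gives `f k #B = ∑ C ⊆ B, f (k + #C) 0` for every finite set `B`. Taking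
for `B` the points of `S` inside a convex polygon `T` turns `F(S)` into the sum of
`f (#T + #B) 0` over pairs `(T, B)` with `B` inside `T`. In general position, `(T, B) ↦ T ∪ B` is
a bijection onto the subsets of `S` with at least three points, inverted by taking the vertices of
the convex hull: a point of `A` that is not a vertex lies in the interior of the hull of `A`.
Hence `F(S) = ∑ m, (n choose m) * f m 0`.
-/

section Vertices

variable {E : Type*} [NormedAddCommGroup E] [NormedSpace ℝ E]

noncomputable def vertices (A : Finset E) : Finset E :=
  A.filter fun p => p ∉ convexHull ℝ ((A : Set E) \ {p})

lemma vertices_subset (A : Finset E) : vertices A ⊆ A :=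
  filter_subset _ _

lemma convexHull_extremePoints_convexHull (A : Finset E) :
    convexHull ℝ ((convexHull ℝ (A : Set E)).extremePoints ℝ) = convexHull ℝ (A : Set E) := by
  have hfin : ((convexHull ℝ (A : Set E)).extremePoints ℝ).Finite :=
    A.finite_toSet.subset extremePoints_convexHull_subset
  rw [← (hfin.isClosed_convexHull ℝ).closure_eq,
    closure_convexHull_extremePoints (A.finite_toSet.isCompact_convexHull ℝ) (convex_convexHull ℝ _)]

lemma coe_vertices (A : Finset E) :
    (vertices A : Set E) = (convexHull ℝ (A : Set E)).extremePoints ℝ := by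
  ext p
  simp only [vertices, coe_filter, Set.mem_ofPred_eq]
  constructor
  · rintro ⟨hpA, hp⟩
    by_contra hext
    have hsub : (convexHull ℝ (A : Set E)).extremePoints ℝ ⊆ (A : Set E) \ {p} :=
      fun q hq => ⟨extremePoints_convexHull_subset hq, fun hqp => hext (hqp ▸ hq)⟩
    refine hp (convexHull_mono hsub ?_)
    rw [convexHull_extremePoints_convexHull]
    exact subset_convexHull ℝ _ hpA
  · intro hp
    refine ⟨extremePoints_convexHull_subset hp, fun hconv => ?_⟩
    exact ((convex_convexHull ℝ _).mem_extremePoints_iff_mem_sdiff_convexHull_sdiff.1 hp).2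
      (convexHull_mono (Set.sdiff_subset_sdiff_left (subset_convexHull ℝ _)) hconv)

lemma convexHull_vertices (A : Finset E) :
    convexHull ℝ (vertices A : Set E) = convexHull ℝ (A : Set E) := by
  rw [coe_vertices, convexHull_extremePoints_convexHull]

lemma vertices_vertices (A : Finset E) : vertices (vertices A) = vertices A :=
  coe_injective <| by rw [coe_vertices, convexHull_vertices, coe_vertices]

lemma vertices_union_of_subset_convexHull [DecidableEq E] {T B : Finset E}
    (hB : (B : Set E) ⊆ convexHull ℝ (T : Set E)) : vertices (T ∪ B) = vertices T := by
  have hconv : convexHull ℝ ((T ∪ B : Finset E) : Set E) = convexHull ℝ (T : Set E) := by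
    rw [coe_union]
    exact (convexHull_min (Set.union_subset (subset_convexHull ℝ _) hB)
      (convex_convexHull ℝ _)).antisymm (convexHull_mono Set.subset_union_left)
  exact coe_injective <| by rw [coe_vertices, coe_vertices, hconv]

lemma disjoint_vertices_interior_convexHull [Nontrivial E] (A : Finset E) :
    Disjoint (vertices A : Set E) (interior (convexHull ℝ (A : Set E))) := by
  rw [coe_vertices]
  exact (disjoint_interior_extremePoints _).symm

end Vertices

lemma convexPos_iff_vertices_eq (T : Finset (ℝ × ℝ)) : ConvexPos T ↔ vertices T = T :=
  filter_eq_self.symm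

lemma AffineIndependent.sum_smul_mem_interior_convexHull {E ι : Type*} [NormedAddCommGroup E]
    [NormedSpace ℝ E] [FiniteDimensional ℝ E] [Fintype ι] {z : ι → E} (hz : AffineIndependent ℝ z)
    (hcard : Fintype.card ι = Module.finrank ℝ E + 1) {w : ι → ℝ} (hw0 : ∀ i, 0 < w i)
    (hw1 : ∑ i, w i = 1) : ∑ i, w i • z i ∈ interior (convexHull ℝ (Set.range z)) := by
  let b : AffineBasis ι ℝ E := ⟨z, hz, hz.affineSpan_eq_top_iff_card_eq_finrank_add_one.2 hcard⟩
  change _ ∈ interior (convexHull ℝ (Set.range b))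
  rw [b.interior_convexHull, ← univ.affineCombination_eq_linear_combination _ _ hw1]
  intro i
  change 0 < b.coord i (univ.affineCombination ℝ b w)
  rw [b.coord_apply_combination_of_mem (mem_univ i) hw1]
  exact hw0 i

namespace GenPos

variable {S : Finset (ℝ × ℝ)}

lemma affineIndependent (hS : GenPos S) {T : Finset (ℝ × ℝ)} (hTS : T ⊆ S) (hT : #T = 3) :
    AffineIndependent ℝ ((↑) : T → ℝ × ℝ) := by
  rw [affineIndependent_iff_not_finrank_vectorSpan_le ℝ _ (by simp [hT] : Fintype.card T = 2 + 1),
    ← collinear_iff_finrank_le_one, Subtype.range_coe]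
  exact hS T hTS hT

/- By Carathéodory, `p` is a positive combination of affinely independent points of `A`: a single
one would be `p` itself, two would put `p` on a line with them, and three form an affine basis. -/
lemma mem_interior_convexHull (hS : GenPos S) {A : Set (ℝ × ℝ)} (hAS : A ⊆ S) {p : ℝ × ℝ}
    (hpS : p ∈ S) (hpA : p ∉ A) (hp : p ∈ convexHull ℝ A) : p ∈ interior (convexHull ℝ A) := by
  obtain ⟨ι, _, z, w, hzA, hz, hw0, hw1, rfl⟩ := eq_pos_convex_span_of_mem_convexHull hp
  have hcard : Fintype.card ι ≤ 2 + 1 := by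
    have := hz.card_le_finrank_succ
    have := Submodule.finrank_le (vectorSpan ℝ (Set.range z))
    simp only [Module.finrank_prod, Module.finrank_self] at this
    omega
  obtain ⟨i⟩ : Nonempty ι := by
    by_contra hempty
    simp [not_nonempty_iff.1 hempty] at hw1
  obtain hsub | h2 | h3 : Fintype.card ι ≤ 1 ∨ Fintype.card ι = 1 + 1 ∨ Fintype.card ι = 2 + 1 := by
    omega
  · have := Fintype.card_le_one_iff_subsingleton.1 hsub
    rw [Fintype.sum_subsingleton _ i] at hw1 hpA
    rw [hw1, one_smul] at hpA
    exact absurd (hzA ⟨i, rfl⟩) hpA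
  · exfalso
    set p := ∑ i, w i • z i
    have hpz : p ∈ affineSpan ℝ (Set.range z) :=
      convexHull_subset_affineSpan _ <| (convex_convexHull ℝ _).sum_mem (fun j _ => (hw0 j).le)
        hw1 fun j _ => subset_convexHull ℝ _ ⟨j, rfl⟩
    have hcol : Collinear ℝ (insert p (Set.range z)) := by
      rw [collinear_insert_iff_of_mem_affineSpan hpz, collinear_iff_finrank_le_one]
      exact finrank_vectorSpan_range_le ℝ z h2
    have hpR : p ∉ univ.image z := fun h => hpA (hzA (by simpa using h))
    refine hS (insert p (univ.image z)) ?_ ?_ (by simpa using hcol)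
    · exact insert_subset hpS fun q hq => hAS (hzA (by simpa using hq))
    · rw [card_insert_of_notMem hpR, card_image_of_injective _ hz.injective, card_univ, h2]
  · exact interior_mono (convexHull_mono hzA)
      (hz.sum_smul_mem_interior_convexHull (by simpa using h3) hw0 hw1)

lemma mem_interior_convexHull_of_notMem_vertices (hS : GenPos S) {A : Finset (ℝ × ℝ)}
    (hAS : A ⊆ S) {p : ℝ × ℝ} (hpA : p ∈ A) (hp : p ∉ vertices A) :
    p ∈ interior (convexHull ℝ (A : Set (ℝ × ℝ))) := by
  have hconv : p ∈ convexHull ℝ ((A : Set (ℝ × ℝ)) \ {p}) := by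
    simpa [vertices, hpA] using hp
  exact interior_mono (convexHull_mono Set.sdiff_subset) <|
    hS.mem_interior_convexHull (Set.sdiff_subset.trans (coe_subset.2 hAS)) (hAS hpA)
      (fun h => h.2 (Set.mem_singleton p)) hconv

lemma three_le_card_vertices (hS : GenPos S) {A : Finset (ℝ × ℝ)} (hAS : A ⊆ S)
    (hA : 3 ≤ #A) : 3 ≤ #(vertices A) := by
  obtain ⟨U, hUA, hU⟩ := exists_subset_card_eq hA
  rw [← hU]
  refine (hS.affineIndependent (hUA.trans hAS) hU).card_le_card_of_subset_affineSpan ?_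
  refine fun u hu => convexHull_subset_affineSpan _ ?_
  rw [convexHull_vertices]
  exact subset_convexHull ℝ _ (hUA hu)

end GenPos

lemma eq_sum_powerset_of_pascal {f : ℕ → ℕ → ℝ} (hf : ∀ k l : ℕ, f k (l + 1) = f (k + 1) l + f k l)
    {α : Type*} (B : Finset α) (k : ℕ) : f k #B = ∑ C ∈ B.powerset, f (k + #C) 0 := by
  induction B using Finset.induction_on generalizing k with
  | empty => simp
  | insert a B ha ih =>
    have hcard : ∀ C ∈ B.powerset, f (k + #(insert a C)) 0 = f (k + 1 + #C) 0 := fun C hC => by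
      rw [card_insert_of_notMem fun haC => ha (mem_powerset.1 hC haC), add_comm #C, add_assoc]
    rw [card_insert_of_notMem ha, hf, ih, ih, sum_powerset_insert ha, sum_congr rfl hcard, add_comm]

lemma sum_powerset_filter_le_card {α : Type*} (s : Finset α) (c : ℕ) (g : ℕ → ℝ) :
    ∑ A ∈ s.powerset with c ≤ #A, g #A = ∑ m ∈ Icc c #s, ((#s).choose m : ℝ) * g m := by
  have hIcc : Icc c #s = {m ∈ range (#s + 1) | c ≤ m} := by
    ext m
    simp only [mem_Icc, mem_filter, mem_range]
    omega
  rw [sum_filter, sum_powerset_apply_card (fun m => if c ≤ m then g m else 0), hIcc, sum_filter]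
  refine sum_congr rfl fun m _ => ?_
  rw [smul_ite, smul_zero, nsmul_eq_mul]

noncomputable def interiorPoints (S T : Finset (ℝ × ℝ)) : Finset (ℝ × ℝ) :=
  S.filter fun p => p ∈ interior (convexHull ℝ (T : Set (ℝ × ℝ)))

noncomputable def convexPolygons (S : Finset (ℝ × ℝ)) : Finset (Finset (ℝ × ℝ)) :=
  S.powerset.filter fun T => 3 ≤ #T ∧ ConvexPos T

lemma mem_convexPolygons {S T : Finset (ℝ × ℝ)} :
    T ∈ convexPolygons S ↔ T ⊆ S ∧ 3 ≤ #T ∧ ConvexPos T := by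
  rw [convexPolygons, mem_filter, mem_powerset]

lemma sum_X_eq_sum_convexPolygons (f : ℕ → ℕ → ℝ) (S : Finset (ℝ × ℝ)) :
    ∑ k ∈ Icc 3 #S, ∑ l ∈ range (#S + 1), f k l * X S k l
      = ∑ T ∈ convexPolygons S, f #T #(interiorPoints S T) := by
  have hmaps : ∀ T ∈ convexPolygons S,
      (#T, #(interiorPoints S T)) ∈ Icc 3 #S ×ˢ range (#S + 1) := fun T hT => by
    obtain ⟨hTS, hT3, -⟩ := mem_convexPolygons.1 hT
    simp only [mem_product, mem_Icc, mem_range]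
    exact ⟨⟨hT3, card_le_card hTS⟩, Nat.lt_succ_of_le (card_filter_le _ _)⟩
  rw [← sum_fiberwise_of_maps_to hmaps, sum_product]
  refine sum_congr rfl fun k hk => sum_congr rfl fun l _ => ?_
  have hfiber : {T ∈ convexPolygons S | (#T, #(interiorPoints S T)) = (k, l)}
      = {T ∈ powersetCard k S | ConvexPos T ∧ #(interiorPoints S T) = l} := by
    ext T
    simp only [mem_filter, mem_convexPolygons, mem_powersetCard, Prod.mk.injEq]
    have hk3 := (mem_Icc.1 hk).1
    constructor
    · rintro ⟨⟨hTS, -, hT⟩, rfl, hl⟩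
      exact ⟨⟨hTS, rfl⟩, hT, hl⟩
    · rintro ⟨⟨hTS, rfl⟩, hT, hl⟩
      exact ⟨⟨hTS, hk3, hT⟩, rfl, hl⟩
  rw [sum_congr rfl fun T hT => by rw [(Prod.mk.inj (mem_filter.1 hT).2).1,
    (Prod.mk.inj (mem_filter.1 hT).2).2], sum_const, hfiber, nsmul_eq_mul, mul_comm]
  rfl

lemma vertices_union_of_subset_interiorPoints {S T B : Finset (ℝ × ℝ)} (hT : ConvexPos T)
    (hB : B ⊆ interiorPoints S T) : vertices (T ∪ B) = T := by
  rw [vertices_union_of_subset_convexHull fun b hb => interior_subset (mem_filter.1 (hB hb)).2,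
    (convexPos_iff_vertices_eq T).1 hT]

lemma disjoint_of_subset_interiorPoints {S T B : Finset (ℝ × ℝ)} (hT : ConvexPos T)
    (hB : B ⊆ interiorPoints S T) : Disjoint T B := by
  have := disjoint_vertices_interior_convexHull T
  rw [(convexPos_iff_vertices_eq T).1 hT] at this
  exact disjoint_coe.1 <| this.mono_right fun b hb => (mem_filter.1 (hB hb)).2

lemma GenPos.sum_convexPolygons_powerset_interiorPoints {S : Finset (ℝ × ℝ)} (hS : GenPos S)
    (g : ℕ → ℝ) :
    ∑ T ∈ convexPolygons S, ∑ B ∈ (interiorPoints S T).powerset, g (#T + #B)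
      = ∑ A ∈ S.powerset with 3 ≤ #A, g #A := by
  rw [sum_sigma']
  refine sum_nbij' (fun x => x.1 ∪ x.2) (fun A => ⟨vertices A, A \ vertices A⟩) ?_ ?_ ?_ ?_ ?_
  · rintro ⟨T, B⟩ hx
    simp only [mem_sigma, mem_powerset, mem_convexPolygons] at hx
    obtain ⟨⟨hTS, hT3, -⟩, hB⟩ := hx
    simp only [mem_filter, mem_powerset]
    exact ⟨union_subset hTS (hB.trans (filter_subset _ _)),
      hT3.trans (card_le_card subset_union_left)⟩
  · intro A hA
    simp only [mem_filter, mem_powerset] at hA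
    obtain ⟨hAS, hA3⟩ := hA
    simp only [mem_sigma, mem_powerset, mem_convexPolygons]
    refine ⟨⟨(vertices_subset A).trans hAS, hS.three_le_card_vertices hAS hA3,
      (convexPos_iff_vertices_eq _).2 (vertices_vertices A)⟩, fun p hp => ?_⟩
    obtain ⟨hpA, hpv⟩ := mem_sdiff.1 hp
    rw [interiorPoints, mem_filter, convexHull_vertices]
    exact ⟨hAS hpA, hS.mem_interior_convexHull_of_notMem_vertices hAS hpA hpv⟩
  · rintro ⟨T, B⟩ hx
    simp only [mem_sigma, mem_powerset, mem_convexPolygons] at hx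
    obtain ⟨⟨-, -, hT⟩, hB⟩ := hx
    simp only [vertices_union_of_subset_interiorPoints hT hB,
      union_sdiff_cancel_left (disjoint_of_subset_interiorPoints hT hB)]
  · intro A _
    exact union_sdiff_of_subset (vertices_subset A)
  · rintro ⟨T, B⟩ hx
    simp only [mem_sigma, mem_powerset, mem_convexPolygons] at hx
    obtain ⟨⟨-, -, hT⟩, hB⟩ := hx
    rw [card_union_of_disjoint (disjoint_of_subset_interiorPoints hT hB)]

theorem GenPos.sum_X_eq_sum_choose {f : ℕ → ℕ → ℝ}
    (hf : ∀ k l : ℕ, f k (l + 1) = f (k + 1) l + f k l) {S : Finset (ℝ × ℝ)} (hS : GenPos S) :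
    ∑ k ∈ Icc 3 #S, ∑ l ∈ range (#S + 1), f k l * X S k l
      = ∑ m ∈ Icc 3 #S, ((#S).choose m : ℝ) * f m 0 := by
  rw [sum_X_eq_sum_convexPolygons,
    sum_congr rfl fun T _ => eq_sum_powerset_of_pascal hf (interiorPoints S T) #T,
    hS.sum_convexPolygons_powerset_interiorPoints (fun m => f m 0),
    sum_powerset_filter_le_card S 3 (fun m => f m 0)]

theorem stmt5 (f : ℕ → ℕ → ℝ)
    (hf : ∀ k l : ℕ, f k (l + 1) = f (k + 1) l + f k l)
    (S₁ S₂ : Finset (ℝ × ℝ)) (h₁ : GenPos S₁) (h₂ : GenPos S₂)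
    (hcard : S₁.card = S₂.card) :
    ∑ k ∈ Finset.Icc 3 S₁.card, ∑ l ∈ Finset.range (S₁.card + 1), f k l * X S₁ k l =
    ∑ k ∈ Finset.Icc 3 S₂.card, ∑ l ∈ Finset.range (S₂.card + 1), f k l * X S₂ k l := by
  rw [h₁.sum_X_eq_sum_choose hf, h₂.sum_X_eq_sum_choose hf, hcard]
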